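/- arXiv:2003.00940 — 9 statements merged into one kernel-verified Lean document; each statement's English description precedes it below -/
import Mathlib

section
/- The vector b₂ := (2α+βm)a₁ + (4−β)a₂ + (α+2m)a₃ is fixed by s₁ and by s₃, the vector b₃ := (2β+αl)a₁ + (β+2l)a₂ + (4−α)a₃ is fixed by s₁ and by s₂, the vector b₁ is fixed by s₂ and by s₃, and, provided it is not the case that both l = −2 and m = −2, the subspace {x ∈ M : s₂(x) = x and s₃(x) = x} is exactly the line K·b₁. -/
noncomputable section

variable {K : Type*} [Field K] [CharZero K]

/-- The linear functional `x ↦ c 0 * x 0 + c 1 * x 1 + c 2 * x 2` on `K³`. -/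
def lf (c : Fin 3 → K) : (Fin 3 → K) →ₗ[K] K :=
  c 0 • LinearMap.proj 0 + c 1 • LinearMap.proj 1 + c 2 • LinearMap.proj 2

/-- `s₁ : x ↦ x − (2x₁ − α x₂ − β x₃)·a₁` where `a₁ = Pi.single 0 1`. -/
def s1 (α β : K) : Module.End K (Fin 3 → K) :=
  LinearMap.id - (lf ![2, -α, -β]).smulRight (Pi.single 0 1)

/-- `s₂ : x ↦ x − (−x₁ + 2x₂ − l·x₃)·a₂`. -/
def s2 (l : K) : Module.End K (Fin 3 → K) :=
  LinearMap.id - (lf ![-1, 2, -l]).smulRight (Pi.single 1 1)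

/-- `s₃ : x ↦ x − (−x₁ − m·x₂ + 2x₃)·a₃`. -/
def s3 (m : K) : Module.End K (Fin 3 → K) :=
  LinearMap.id - (lf ![-1, -m, 2]).smulRight (Pi.single 2 1)

/-- `b = b₁ = (4−γ)a₁ + (l+2)a₂ + (m+2)a₃`, with `γ = l·m`. -/
def bvec (l m : K) : Fin 3 → K := ![4 - l * m, l + 2, m + 2]

/-- `b₂ = (2α+βm)a₁ + (4−β)a₂ + (α+2m)a₃`. -/
def b2vec (α β l m : K) : Fin 3 → K := ![2*α + β*m, 4 - β, α + 2*m]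

/-- `b₃ = (2β+αl)a₁ + (β+2l)a₂ + (4−α)a₃`. -/
def b3vec (α β l m : K) : Fin 3 → K := ![2*β + α*l, β + 2*l, 4 - α]

/-- `τ(λ,μ) : a₁ ↦ a₁ + ω·b, a₂ ↦ a₂ + λ·b, a₃ ↦ a₃ + μ·b`,
where `ω = −(λ(l+2) + μ(m+2))/(4−γ)`. -/
def tau (l m lam mu : K) : Module.End K (Fin 3 → K) :=
  LinearMap.id +
    (lf ![-(lam*(l+2) + mu*(m+2))/(4 - l*m), lam, mu]).smulRight (bvec l m)

/-- `τ` applied to a vector `(λ,μ) ∈ K²`. -/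
def tauv (l m : K) (v : K × K) : Module.End K (Fin 3 → K) := tau l m v.1 v.2

def c1 (α β : K) : K × K := (α, β)
def c2 (l : K) : K × K := (-2, l)
def c3 (m : K) : K × K := (m, -2)

/-- `z₁ : a₁ ↦ −a₁ + (2/(4−γ))·b, a₂ ↦ −a₂, a₃ ↦ −a₃`. -/
def z1 (l m : K) : Module.End K (Fin 3 → K) :=
  -LinearMap.id + (lf ![2/(4 - l*m), 0, 0]).smulRight (bvec l m)

/-- `z₂ : a₂ ↦ −a₂ + (2/(l+2))·b, a₁ ↦ −a₁, a₃ ↦ −a₃`. -/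
def z2 (l m : K) : Module.End K (Fin 3 → K) :=
  -LinearMap.id + (lf ![0, 2/(l+2), 0]).smulRight (bvec l m)

/-- `z₃ : a₃ ↦ −a₃ + (2/(m+2))·b, a₁ ↦ −a₁, a₂ ↦ −a₂`. -/
def z3 (l m : K) : Module.End K (Fin 3 → K) :=
  -LinearMap.id + (lf ![0, 0, 2/(m+2)]).smulRight (bvec l m)

/-- The linear functional `(λ,μ) ↦ c.1·λ + c.2·μ` on `K²`. -/
def lf2 (c : K × K) : (K × K) →ₗ[K] K := c.1 • LinearMap.fst K K K + c.2 • LinearMap.snd K K K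

/-- `σ₁(λ,μ) = (λ,μ) − ((λ(l+2)+μ(m+2))/(4−γ))·(α,β)`. -/
def sigma1 (α β l m : K) : Module.End K (K × K) :=
  LinearMap.id - (lf2 ((l+2)/(4 - l*m), (m+2)/(4 - l*m))).smulRight (α, β)

/-- `σ₂(λ,μ) = (λ,μ) + λ·(−2,l)`. -/
def sigma2 (l : K) : Module.End K (K × K) :=
  LinearMap.id + (LinearMap.fst K K K).smulRight ((-2 : K), l)

/-- `σ₃(λ,μ) = (λ,μ) + μ·(m,−2)`. -/
def sigma3 (m : K) : Module.End K (K × K) :=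
  LinearMap.id + (LinearMap.snd K K K).smulRight (m, (-2 : K))

/-- The sequence `u_x` : `u_x(0)=0, u_x(1)=u_x(2)=1, u_x(3)=x−1,
u_x(n+4) = (x−2)·u_x(n+2) − u_x(n)`. -/
def useq (x : K) : ℕ → K
  | 0 => 0
  | 1 => 1
  | 2 => 1
  | 3 => x - 1
  | (n+4) => (x - 2) * useq x (n+2) - useq x n


lemma s1_fix (α β : K) (x : Fin 3 → K) : s1 α β x = x ↔ 2*x 0 - α*x 1 - β*x 2 = 0 := by
  simp only [s1, lf]
  rw [LinearMap.sub_apply, LinearMap.id_apply, sub_eq_self, LinearMap.smulRight_apply,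
    smul_eq_zero]
  constructor
  · rintro (h | h)
    · simp at h; linear_combination h
    · exact absurd (congrFun h 0) (by simp)
  · intro h; left; simp; linear_combination h

lemma s2_fix (l : K) (x : Fin 3 → K) : s2 l x = x ↔ -x 0 + 2*x 1 - l*x 2 = 0 := by
  simp only [s2, lf]
  rw [LinearMap.sub_apply, LinearMap.id_apply, sub_eq_self, LinearMap.smulRight_apply,
    smul_eq_zero]
  constructor
  · rintro (h | h)
    · simp at h; linear_combination h
    · exact absurd (congrFun h 1) (by simp)
  · intro h; left; simp; linear_combination h

lemma s3_fix (m : K) (x : Fin 3 → K) : s3 m x = x ↔ -x 0 - m*x 1 + 2*x 2 = 0 := by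
  simp only [s3, lf]
  rw [LinearMap.sub_apply, LinearMap.id_apply, sub_eq_self, LinearMap.smulRight_apply,
    smul_eq_zero]
  constructor
  · rintro (h | h)
    · simp at h; linear_combination h
    · exact absurd (congrFun h 2) (by simp)
  · intro h; left; simp; linear_combination h

/-- `b₂` is fixed by `s₁` and `s₃`, `b₃` is fixed by `s₁` and `s₂`,
`b₁` is fixed by `s₂` and `s₃`, and if not both `l = −2` and `m = −2`, then
`{x | s₂ x = x ∧ s₃ x = x}` is exactly the line `K·b₁`. -/
theorem stmt0 (α β l m : K) :
    s1 α β (b2vec α β l m) = b2vec α β l m ∧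
    s3 m (b2vec α β l m) = b2vec α β l m ∧
    s1 α β (b3vec α β l m) = b3vec α β l m ∧
    s2 l (b3vec α β l m) = b3vec α β l m ∧
    s2 l (bvec l m) = bvec l m ∧
    s3 m (bvec l m) = bvec l m ∧
    (¬ (l = -2 ∧ m = -2) →
      {x : Fin 3 → K | s2 l x = x ∧ s3 m x = x}
        = (Submodule.span K {bvec l m} : Set (Fin 3 → K))) := by
  refine ⟨?_, ?_, ?_, ?_, ?_, ?_, ?_⟩
  · rw [s1_fix]; simp [b2vec]; ring
  · rw [s3_fix]; simp [b2vec]; ring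
  · rw [s1_fix]; simp [b3vec]; ring
  · rw [s2_fix]; simp [b3vec]; ring
  · rw [s2_fix]; simp [bvec]; ring
  · rw [s3_fix]; simp [bvec]; ring
  · intro hlm
    ext x
    simp only [Set.mem_setOf_eq, s2_fix, s3_fix, SetLike.mem_coe,
      Submodule.mem_span_singleton]
    constructor
    · rintro ⟨h2, h3⟩
      by_cases hm : m = -2
      · subst hm
        have hl2 : l + 2 ≠ 0 := fun h => hlm ⟨by linear_combination h, rfl⟩
        have hx2 : x 2 = 0 := by
          have h : (l + 2) * x 2 = 0 := by linear_combination h3 - h2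
          exact (mul_eq_zero.mp h).resolve_left hl2
        refine ⟨x 1 / (l + 2), ?_⟩
        funext i; fin_cases i
        · symm; show x 0 = _
          simp only [bvec]; simp; field_simp
          linear_combination -(l+2)*h2 - l*(l+2)*hx2
        · symm; show x 1 = _
          simp only [bvec]; simp; field_simp
        · symm; show x 2 = _
          simp only [bvec]; simp [hx2]
      · have hm2 : m + 2 ≠ 0 := fun h => hm (by linear_combination h)
        have hx1 : (m + 2) * x 1 = (l + 2) * x 2 := by linear_combination h2 - h3
        refine ⟨x 2 / (m + 2), ?_⟩
        funext i; fin_cases i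
        · symm; show x 0 = _
          simp only [bvec]; simp; field_simp
          linear_combination -(m+2)*h3 - m*hx1
        · symm; show x 1 = _
          simp only [bvec]; simp; field_simp
          linear_combination hx1
        · symm; show x 2 = _
          simp only [bvec]; simp; field_simp
    · rintro ⟨c, rfl⟩
      constructor
      · simp [bvec]; ring
      · simp [bvec]; ring


end
end

section
/- There exists a nonzero vector x ∈ M with s₁(x) = x, s₂(x) = x and s₃(x) = x if and only if Δ = 0. (Equivalently: the representation generated by s₁, s₂, s₃ is reducible with a nonzero fixed vector exactly when Δ = 0.) -/
noncomputable section

variable {K : Type*} [Field K] [CharZero K]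

/-- there is a nonzero vector fixed by `s₁, s₂, s₃` iff `Δ = 0`. -/
theorem stmt1 (α β l m : K) :
    (∃ x : Fin 3 → K, x ≠ 0 ∧ s1 α β x = x ∧ s2 l x = x ∧ s3 m x = x) ↔
      8 - 2*α - 2*β - 2*(l*m) - (α*l + β*m) = 0 := by
  set A : Matrix (Fin 3) (Fin 3) K := Matrix.of ![![2,-α,-β],![-1,2,-l],![-1,-m,2]] with hA
  have hfix : ∀ x : Fin 3 → K,
      (s1 α β x = x ∧ s2 l x = x ∧ s3 m x = x) ↔ A.mulVec x = 0 := by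
    intro x
    have gen : ∀ (c : Fin 3 → K) (i : Fin 3),
        x - (lf c x) • (Pi.single i 1 : Fin 3 → K) = x ↔ c 0 * x 0 + c 1 * x 1 + c 2 * x 2 = 0 := by
      intro c i
      rw [sub_eq_self, smul_eq_zero]
      constructor
      · rintro (h | h)
        · simpa [lf] using h
        · exact absurd (congrFun h i) (by simp)
      · intro h; left; simpa [lf] using h
    have h1 : s1 α β x = x ↔ 2 * x 0 + -α * x 1 + -β * x 2 = 0 := by
      simpa [s1] using gen ![2, -α, -β] 0
    have h2 : s2 l x = x ↔ -1 * x 0 + 2 * x 1 + -l * x 2 = 0 := by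
      simpa [s2] using gen ![-1, 2, -l] 1
    have h3 : s3 m x = x ↔ -1 * x 0 + -m * x 1 + 2 * x 2 = 0 := by
      simpa [s3] using gen ![-1, -m, 2] 2
    rw [h1, h2, h3, funext_iff, Fin.forall_fin_succ, Fin.forall_fin_succ, Fin.forall_fin_succ]
    simp [hA, Matrix.mulVec, dotProduct, Fin.sum_univ_three]
  have hdet : A.det = 8 - 2*α - 2*β - 2*(l*m) - (α*l + β*m) := by
    rw [hA, Matrix.det_fin_three]; simp [Matrix.vecHead, Matrix.vecTail]; ring
  rw [← hdet, ← Matrix.exists_mulVec_eq_zero_iff]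
  constructor
  · rintro ⟨x, hx, h⟩; exact ⟨x, hx, (hfix x).mp h⟩
  · rintro ⟨x, hx, h⟩; exact ⟨x, hx, (hfix x).mpr h⟩

end
end

section
/- Assume α ≠ 0, β ≠ 0, l ≠ 0 and m ≠ 0. Then Δ = 0 is equivalent to each one of the following nine relations: (4−α)(2α+βm) = (α+2m)(2β+αl); (4−β)(2β+αl) = (β+2l)(2α+βm); (4−α)(4−β) = (β+2l)(α+2m); (4−α)(l+2) = (m+2)(β+2l); (4−γ)(β+2l) = (l+2)(2β+αl); (4−α)(4−γ) = (m+2)(2β+αl); (4−β)(m+2) = (l+2)(α+2m); (4−γ)(α+2m) = (m+2)(2α+βm); (4−β)(4−γ) = (l+2)(2α+βm). -/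
noncomputable section

variable {K : Type*} [Field K] [CharZero K]

/-- for `α, β, l, m ≠ 0` (and `γ = l·m`), `Δ = 0` is equivalent to each of
the nine relations `(𝒯)`. -/
theorem stmt3 (α β l m : K) (hα : α ≠ 0) (hβ : β ≠ 0) (hl : l ≠ 0) (hm : m ≠ 0) :
    (8 - 2*α - 2*β - 2*(l*m) - (α*l + β*m) = 0 ↔
      (4-α)*(2*α+β*m) = (α+2*m)*(2*β+α*l)) ∧
    (8 - 2*α - 2*β - 2*(l*m) - (α*l + β*m) = 0 ↔
      (4-β)*(2*β+α*l) = (β+2*l)*(2*α+β*m)) ∧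
    (8 - 2*α - 2*β - 2*(l*m) - (α*l + β*m) = 0 ↔
      (4-α)*(4-β) = (β+2*l)*(α+2*m)) ∧
    (8 - 2*α - 2*β - 2*(l*m) - (α*l + β*m) = 0 ↔
      (4-α)*(l+2) = (m+2)*(β+2*l)) ∧
    (8 - 2*α - 2*β - 2*(l*m) - (α*l + β*m) = 0 ↔
      (4-l*m)*(β+2*l) = (l+2)*(2*β+α*l)) ∧
    (8 - 2*α - 2*β - 2*(l*m) - (α*l + β*m) = 0 ↔
      (4-α)*(4-l*m) = (m+2)*(2*β+α*l)) ∧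
    (8 - 2*α - 2*β - 2*(l*m) - (α*l + β*m) = 0 ↔
      (4-β)*(m+2) = (l+2)*(α+2*m)) ∧
    (8 - 2*α - 2*β - 2*(l*m) - (α*l + β*m) = 0 ↔
      (4-l*m)*(α+2*m) = (m+2)*(2*α+β*m)) ∧
    (8 - 2*α - 2*β - 2*(l*m) - (α*l + β*m) = 0 ↔
      (4-β)*(4-l*m) = (l+2)*(2*α+β*m)) := by
  refine ⟨?_, ?_, ?_, ?_, ?_, ?_, ?_, ?_, ?_⟩
  · constructor
    · intro h; linear_combination α * h
    · intro h
      have h2 : α * (8 - 2*α - 2*β - 2*(l*m) - (α*l + β*m)) = 0 := by linear_combination h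
      exact (mul_eq_zero.mp h2).resolve_left hα
  · constructor
    · intro h; linear_combination β * h
    · intro h
      have h2 : β * (8 - 2*α - 2*β - 2*(l*m) - (α*l + β*m)) = 0 := by linear_combination h
      exact (mul_eq_zero.mp h2).resolve_left hβ
  · constructor
    · intro h; linear_combination (2:K) * h
    · intro h
      have h2 : (2:K) * (8 - 2*α - 2*β - 2*(l*m) - (α*l + β*m)) = 0 := by linear_combination h
      exact (mul_eq_zero.mp h2).resolve_left two_ne_zero
  · constructor
    · intro h; linear_combination (1:K) * h
    · intro h
      have h2 : (1:K) * (8 - 2*α - 2*β - 2*(l*m) - (α*l + β*m)) = 0 := by linear_combination h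
      exact (mul_eq_zero.mp h2).resolve_left one_ne_zero
  · constructor
    · intro h; linear_combination l * h
    · intro h
      have h2 : l * (8 - 2*α - 2*β - 2*(l*m) - (α*l + β*m)) = 0 := by linear_combination h
      exact (mul_eq_zero.mp h2).resolve_left hl
  · constructor
    · intro h; linear_combination (2:K) * h
    · intro h
      have h2 : (2:K) * (8 - 2*α - 2*β - 2*(l*m) - (α*l + β*m)) = 0 := by linear_combination h
      exact (mul_eq_zero.mp h2).resolve_left two_ne_zero
  · constructor
    · intro h; linear_combination (1:K) * h
    · intro h
      have h2 : (1:K) * (8 - 2*α - 2*β - 2*(l*m) - (α*l + β*m)) = 0 := by linear_combination h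
      exact (mul_eq_zero.mp h2).resolve_left one_ne_zero
  · constructor
    · intro h; linear_combination m * h
    · intro h
      have h2 : m * (8 - 2*α - 2*β - 2*(l*m) - (α*l + β*m)) = 0 := by linear_combination h
      exact (mul_eq_zero.mp h2).resolve_left hm
  · constructor
    · intro h; linear_combination (2:K) * h
    · intro h
      have h2 : (2:K) * (8 - 2*α - 2*β - 2*(l*m) - (α*l + β*m)) = 0 := by linear_combination h
      exact (mul_eq_zero.mp h2).resolve_left two_ne_zero

end
end

section
/- Assume Δ = 0. Writing Q(a,b,c)(X) := X² − 2(4−a−b−c)X + abc and α' := 4−α, β' := 4−β, γ' := 4−γ, the following factorizations hold in K[X]: Q(α',β',γ)(X) = (X + l(α+2m))·(X + m(β+2l)); Q(α',β,γ')(X) = (X + β(m+2))·(X + (2β+αl)); Q(α,β',γ')(X) = (X + α(l+2))·(X + (2α+βm)). In particular the roots of Q(α',β',γ) are −l(α+2m) and −m(β+2l), the roots of Q(α',β,γ') are −β(m+2) and −(2β+αl), and the roots of Q(α,β',γ') are −α(l+2) and −(2α+βm). -/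
noncomputable section

variable {K : Type*} [Field K] [CharZero K]

open Polynomial in
/-- `Q(a,b,c)(X) = X² − 2(4−a−b−c)X + abc`. -/
def Qpoly (a b c : K) : Polynomial K := X^2 - C (2*(4-a-b-c)) * X + C (a*b*c)

open Polynomial in
/-- if `Δ = 0`, then (with `α' = 4−α`, `β' = 4−β`, `γ' = 4−γ`, `γ = lm`)
`Q(α',β',γ) = (X + l(α+2m))(X + m(β+2l))`, `Q(α',β,γ') = (X + β(m+2))(X + (2β+αl))`,
`Q(α,β',γ') = (X + α(l+2))(X + (2α+βm))`; in particular the indicated elements are roots. -/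
theorem stmt4 (α β l m : K)
    (hΔ : 8 - 2*α - 2*β - 2*(l*m) - (α*l + β*m) = 0) :
    Qpoly (4-α) (4-β) (l*m) = (X + C (l*(α+2*m))) * (X + C (m*(β+2*l))) ∧
    Qpoly (4-α) β (4-l*m) = (X + C (β*(m+2))) * (X + C (2*β+α*l)) ∧
    Qpoly α (4-β) (4-l*m) = (X + C (α*(l+2))) * (X + C (2*α+β*m)) ∧
    (Qpoly (4-α) (4-β) (l*m)).IsRoot (-(l*(α+2*m))) ∧
    (Qpoly (4-α) (4-β) (l*m)).IsRoot (-(m*(β+2*l))) ∧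
    (Qpoly (4-α) β (4-l*m)).IsRoot (-(β*(m+2))) ∧
    (Qpoly (4-α) β (4-l*m)).IsRoot (-(2*β+α*l)) ∧
    (Qpoly α (4-β) (4-l*m)).IsRoot (-(α*(l+2))) ∧
    (Qpoly α (4-β) (4-l*m)).IsRoot (-(2*α+β*m)) := by
  have hC := congrArg Polynomial.C hΔ
  simp only [map_sub, map_add, map_mul, map_ofNat, map_zero] at hC
  have h1 : Qpoly (4-α) (4-β) (l*m) = (X + C (l*(α+2*m))) * (X + C (m*(β+2*l))) := by
    simp only [Qpoly, map_sub, map_add, map_mul, map_ofNat]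
    linear_combination (X + 2 * C l * C m) * hC
  have h2 : Qpoly (4-α) β (4-l*m) = (X + C (β*(m+2))) * (X + C (2*β+α*l)) := by
    simp only [Qpoly, map_sub, map_add, map_mul, map_ofNat]
    linear_combination (X + 2 * C β) * hC
  have h3 : Qpoly α (4-β) (4-l*m) = (X + C (α*(l+2))) * (X + C (2*α+β*m)) := by
    simp only [Qpoly, map_sub, map_add, map_mul, map_ofNat]
    linear_combination (X + 2 * C α) * hC
  refine ⟨h1, h2, h3, ?_, ?_, ?_, ?_, ?_, ?_⟩ <;>
    simp [h1, h2, h3, IsRoot, eval_mul, eval_add] <;> ring_nf <;> simp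

end
end

section
/- Assume Δ = 0 and γ ≠ 4. Then for all λ, μ ∈ K: s₁ ∘ τ(λ,μ) ∘ s₁ = τ(λ + ω·α, μ + ω·β) where ω := −(λ(l+2) + μ(m+2))/(4−γ); s₂ ∘ τ(λ,μ) ∘ s₂ = τ(−λ, μ + λ·l); and s₃ ∘ τ(λ,μ) ∘ s₃ = τ(λ + μ·m, −μ). In particular each sᵢ normalizes the group of all maps τ(λ,μ). -/
/-!
Each `sᵢ` is a reflection `x ↦ x - gᵢ(x) aᵢ` with `gᵢ(aᵢ) = 2`, and `τ(λ,μ)` is the transvection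
`x ↦ x + f(x) b` whose form `f = (ω, λ, μ)` is the unique one with `f(a₂) = λ`, `f(a₃) = μ` and
`f(b) = 0`. Conjugating a transvection by an involution `s` gives the transvection with data
`(f ∘ s, s b)`. Now `gᵢ(b) = 0` for `i = 2, 3` always and for `i = 1` exactly when `Δ = 0`, so `sᵢ`
fixes `b`; hence `f ∘ sᵢ = f - f(aᵢ) gᵢ` still kills `b`, and the conjugate is again a `τ`, whose
parameters are the second and third coefficients of `f - f(aᵢ) gᵢ`.
-/

noncomputable section

variable {K : Type*} [Field K] [CharZero K]

open Module LinearMap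

theorem Module.preReflection_mul_transvection_mul_preReflection
    {R M : Type*} [CommRing R] [AddCommGroup M] [Module R M]
    {x : M} {f : Dual R M} (hfx : f x = 2) (g : Dual R M) (v : M) :
    preReflection x f * transvection g v * preReflection x f
      = transvection (g ∘ₗ preReflection x f) (preReflection x f v) := by
  have hsymm : ((reflection hfx).symm : M →ₗ[R] M) = preReflection x f := by
    rw [reflection_symm]; rfl
  calc _ = (reflection hfx : M →ₗ[R] M) ∘ₗ transvection g v ∘ₗ (reflection hfx).symm := by
        rw [hsymm]; rfl
    _ = _ := transvection.congr g v (reflection hfx)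

section

omit [CharZero K]

theorem lf_apply (c x : Fin 3 → K) : lf c x = c ⬝ᵥ x := by
  simp [lf, dotProduct, Fin.sum_univ_three]

theorem lf_bvec (c : Fin 3 → K) (l m : K) :
    lf c (bvec l m) = c 0 * (4 - l*m) + c 1 * (l+2) + c 2 * (m+2) := by
  simp [lf, bvec]

theorem lf_comp_preReflection_single (c g : Fin 3 → K) (i : Fin 3) :
    lf c ∘ₗ preReflection (Pi.single i 1) (lf g) = lf (c - c i • g) := by
  ext x
  simp only [comp_apply, preReflection_apply, lf_apply, dotProduct_sub, dotProduct_smul,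
    dotProduct_single, sub_dotProduct, smul_dotProduct, smul_eq_mul, mul_one]
  ring

def tauCoeff (l m lam mu : K) : Fin 3 → K :=
  ![-(lam*(l+2) + mu*(m+2))/(4 - l*m), lam, mu]

theorem tau_eq_transvection (l m lam mu : K) :
    tau l m lam mu = transvection (lf (tauCoeff l m lam mu)) (bvec l m) := by
  ext x i
  simp [tau, tauCoeff, transvection.apply]

theorem lf_tauCoeff_bvec {l m : K} (hγ : l*m ≠ 4) (lam mu : K) :
    lf (tauCoeff l m lam mu) (bvec l m) = 0 := by
  have h4 : (4 : K) - l*m ≠ 0 := sub_ne_zero_of_ne hγ.symm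
  rw [lf_bvec]
  simp only [tauCoeff, Matrix.cons_val, div_mul_cancel₀ _ h4]
  ring

theorem transvection_eq_tau {l m : K} (hγ : l*m ≠ 4) {c : Fin 3 → K}
    (hc : lf c (bvec l m) = 0) :
    transvection (lf c) (bvec l m) = tau l m (c 1) (c 2) := by
  have h4 : (4 : K) - l*m ≠ 0 := sub_ne_zero_of_ne hγ.symm
  have hc0 : c 0 = -(c 1*(l+2) + c 2*(m+2))/(4 - l*m) := by
    rw [lf_bvec] at hc
    rw [eq_div_iff h4]
    linear_combination hc
  have hc_eq : c = tauCoeff l m (c 1) (c 2) := by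
    ext i; fin_cases i <;> simp [tauCoeff, hc0]
  rw [tau_eq_transvection, ← hc_eq]

theorem preReflection_mul_tau_mul_preReflection {l m : K} (hγ : l*m ≠ 4) {i : Fin 3}
    {g : Fin 3 → K} (hgi : g i = 2) (hgb : lf g (bvec l m) = 0) (lam mu : K) :
    preReflection (Pi.single i 1) (lf g) * tau l m lam mu * preReflection (Pi.single i 1) (lf g)
      = tau l m (lam - tauCoeff l m lam mu i * g 1) (mu - tauCoeff l m lam mu i * g 2) := by
  have hgx : lf g (Pi.single i 1) = 2 := by simp [lf_apply, hgi]
  have hb : preReflection (Pi.single i 1) (lf g) (bvec l m) = bvec l m := by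
    simp [preReflection_apply, hgb]
  rw [tau_eq_transvection, preReflection_mul_transvection_mul_preReflection hgx, hb,
    lf_comp_preReflection_single, transvection_eq_tau hγ]
  · rfl
  · rw [← lf_comp_preReflection_single, comp_apply, hb, lf_tauCoeff_bvec hγ]

end

/-- if `Δ = 0` and `γ ≠ 4` then, with `ω = −(λ(l+2)+μ(m+2))/(4−γ)`,
`s₁ ∘ τ(λ,μ) ∘ s₁ = τ(λ+ωα, μ+ωβ)`, `s₂ ∘ τ(λ,μ) ∘ s₂ = τ(−λ, μ+λl)` and
`s₃ ∘ τ(λ,μ) ∘ s₃ = τ(λ+μm, −μ)`; in particular each `sᵢ` normalizes `{τ(λ,μ)}`. -/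
theorem stmt5 (α β l m : K)
    (hΔ : 8 - 2*α - 2*β - 2*(l*m) - (α*l + β*m) = 0) (hγ : l*m ≠ 4)
    (lam mu : K) :
    s1 α β * tau l m lam mu * s1 α β
      = tau l m (lam + (-(lam*(l+2) + mu*(m+2))/(4 - l*m)) * α)
               (mu + (-(lam*(l+2) + mu*(m+2))/(4 - l*m)) * β) ∧
    s2 l * tau l m lam mu * s2 l = tau l m (-lam) (mu + lam*l) ∧
    s3 m * tau l m lam mu * s3 m = tau l m (lam + mu*m) (-mu) := by
  have hb1 : lf ![2, -α, -β] (bvec l m) = 0 := by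
    rw [lf_bvec]; simp only [Matrix.cons_val]; linear_combination hΔ
  have hb2 : lf ![-1, 2, -l] (bvec l m) = 0 := by
    rw [lf_bvec]; simp only [Matrix.cons_val]; ring
  have hb3 : lf ![-1, -m, 2] (bvec l m) = 0 := by
    rw [lf_bvec]; simp only [Matrix.cons_val]; ring
  refine ⟨?_, ?_, ?_⟩
  · refine (preReflection_mul_tau_mul_preReflection hγ (i := 0) rfl hb1 lam mu).trans ?_
    congr 1 <;> simp only [tauCoeff, Matrix.cons_val] <;> ring
  · refine (preReflection_mul_tau_mul_preReflection hγ (i := 1) rfl hb2 lam mu).trans ?_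
    congr 1 <;> simp only [tauCoeff, Matrix.cons_val] <;> ring
  · refine (preReflection_mul_tau_mul_preReflection hγ (i := 2) rfl hb3 lam mu).trans ?_
    congr 1 <;> simp only [tauCoeff, Matrix.cons_val] <;> ring

end
end

section
/- (Proposition 1, double-root case.) Assume Δ = 0, γ ≠ 4, α ≠ 0, β ≠ 0 and αl = βm. Since Δ = 0, each sᵢ fixes b, so s₁, s₂, s₃ induce linear maps s̄₁, s̄₂, s̄₃ on the quotient M̄ := M/(K·b). Let e : K² → M̄ be the linear map determined by e(c₂) = α⁻¹·[a₂] and e(c₃) = β⁻¹·[a₃] (well defined since (c₂, c₃) is a basis of K², as γ ≠ 4). Then e is a linear isomorphism and e ∘ σᵢ = s̄ᵢ ∘ e for i = 1, 2, 3. -/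
noncomputable section

variable {K : Type*} [Field K] [CharZero K]

/-!
Since `α l = β m`, `c₁ = -(α(l+2) c₂ + β(m+2) c₃)/(4-γ)`, so
`e(c₁) = -((l+2)[a₂] + (m+2)[a₃])/(4-γ)`, which is `[a₁]` because `[b] = 0`. Hence the image of
`e` contains `[a₁], [a₂], [a₃]`, so `e` maps onto the two-dimensional space `M̄` and is bijective.
The maps `e ∘ σᵢ` and `s̄ᵢ ∘ e` are linear, so they need only be compared on `c₂, c₃`: there `σᵢ`
adds multiples of `c₁, c₂, c₃` exactly as `sᵢ` adds multiples of `a₁, a₂, a₃` to `a₂, a₃`, and the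
different scalings `α⁻¹, β⁻¹` of `e` on `c₂, c₃` are reconciled by `α l = β m`.
-/

lemma span_singleton_le_comap_of_apply_eq {R M : Type*} [Semiring R] [AddCommMonoid M]
    [Module R M] {f : M →ₗ[R] M} {b : M} (hb : f b = b) : R ∙ b ≤ (R ∙ b).comap f := by
  rw [Submodule.span_singleton_le_iff_mem, Submodule.mem_comap, hb]
  exact Submodule.mem_span_singleton_self b

lemma Submodule.Quotient.mk_apply_eq_of_mapQ_comp_eq {R M V : Type*} [Ring R] [AddCommGroup M]
    [Module R M] [AddCommGroup V] [Module R V] {p : Submodule R M} {f : M →ₗ[R] M}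
    {hf : p ≤ p.comap f} {g : V →ₗ[R] V} {e : V →ₗ[R] M ⧸ p} (h : p.mapQ p f hf ∘ₗ e = e ∘ₗ g)
    {v : V} {x : M} (hx : mk x = e v) : mk (f x) = e (g v) := by
  rw [← Submodule.mapQ_apply p p f (h := hf), hx]
  exact LinearMap.congr_fun h v

section

omit [CharZero K]

variable (α β l m : K)

lemma lf_apply_single (c : Fin 3 → K) (j : Fin 3) : lf c (Pi.single j 1) = c j := by
  fin_cases j <;> simp [lf]

lemma s1_apply_single (j : Fin 3) :
    s1 α β (Pi.single j 1) = Pi.single j 1 - (![2, -α, -β] j) • Pi.single 0 1 := by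
  simp [s1, lf_apply_single]

lemma s2_apply_single (j : Fin 3) :
    s2 l (Pi.single j 1) = Pi.single j 1 - (![-1, 2, -l] j) • Pi.single 1 1 := by
  simp [s2, lf_apply_single]

lemma s3_apply_single (j : Fin 3) :
    s3 m (Pi.single j 1) = Pi.single j 1 - (![-1, -m, 2] j) • Pi.single 2 1 := by
  simp [s3, lf_apply_single]

lemma bvec_eq_sum : bvec l m =
    (4 - l*m) • Pi.single 0 1 + (l + 2) • Pi.single 1 1 + (m + 2) • Pi.single 2 1 := by
  ext i; fin_cases i <;> simp [bvec]

lemma s1_apply_bvec (hΔ : 8 - 2*α - 2*β - 2*(l*m) - (α*l + β*m) = 0) :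
    s1 α β (bvec l m) = bvec l m := by
  ext i; fin_cases i <;> simp [s1, lf, bvec]; linear_combination hΔ

lemma s2_apply_bvec : s2 l (bvec l m) = bvec l m := by
  ext i; fin_cases i <;> simp [s2, lf, bvec]; ring

lemma s3_apply_bvec : s3 m (bvec l m) = bvec l m := by
  ext i; fin_cases i <;> simp [s3, lf, bvec]; ring

variable {α β l m}

lemma sigma1_apply_c2 (hγ : l*m ≠ 4) : sigma1 α β l m (c2 l) = c2 l + c1 α β := by
  have : (4 : K) - m*l ≠ 0 := mul_comm l m ▸ sub_ne_zero.2 hγ.symm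
  ext <;> simp [sigma1, lf2, c1, c2] <;> field_simp <;> ring

lemma sigma1_apply_c3 (hγ : l*m ≠ 4) : sigma1 α β l m (c3 m) = c3 m + c1 α β := by
  have : (4 : K) - m*l ≠ 0 := mul_comm l m ▸ sub_ne_zero.2 hγ.symm
  ext <;> simp [sigma1, lf2, c1, c3] <;> field_simp <;> ring

lemma sigma2_apply_c2 : sigma2 l (c2 l) = -c2 l := by
  simp only [sigma2, c2, LinearMap.add_apply, LinearMap.id_coe, id_eq, LinearMap.coe_smulRight,
    LinearMap.fst_apply, Prod.smul_mk, smul_eq_mul, Prod.neg_mk, Prod.mk_add_mk, Prod.mk.injEq]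
  constructor <;> ring

lemma sigma2_apply_c3 : sigma2 l (c3 m) = c3 m + m • c2 l := by
  simp [sigma2, c2, c3]

lemma sigma3_apply_c2 : sigma3 m (c2 l) = c2 l + l • c3 m := by
  simp [sigma3, c2, c3]

lemma sigma3_apply_c3 : sigma3 m (c3 m) = -c3 m := by
  simp only [sigma3, c3, LinearMap.add_apply, LinearMap.id_coe, id_eq, LinearMap.coe_smulRight,
    LinearMap.snd_apply, Prod.smul_mk, smul_eq_mul, Prod.neg_mk, Prod.mk_add_mk, Prod.mk.injEq]
  constructor <;> ring

lemma span_c2_c3_eq_top (hγ : l*m ≠ 4) : Submodule.span K {c2 l, c3 m} = ⊤ := by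
  have : (4 : K) - m*l ≠ 0 := mul_comm l m ▸ sub_ne_zero.2 hγ.symm
  refine eq_top_iff.2 fun u _ ↦ Submodule.mem_span_pair.2
    ⟨(-2*u.1 - m*u.2)/(4 - l*m), (-l*u.1 - 2*u.2)/(4 - l*m), ?_⟩
  ext <;> simp only [c2, c3, Prod.smul_mk, smul_eq_mul, Prod.mk_add_mk] <;> field_simp <;> ring

lemma c1_eq_smul_c2_add_smul_c3 (hγ : l*m ≠ 4) (hdr : α*l = β*m) :
    c1 α β = (-(α*(l+2))/(4 - l*m)) • c2 l + (-(β*(m+2))/(4 - l*m)) • c3 m := by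
  have : (4 : K) - l*m ≠ 0 := sub_ne_zero.2 hγ.symm
  ext <;> simp only [c1, c2, c3, Prod.smul_mk, smul_eq_mul, Prod.mk_add_mk] <;> field_simp
  · linear_combination (-(m + 2)) * hdr
  · linear_combination (l + 2) * hdr

local notation "ā" i => (Submodule.Quotient.mk (Pi.single i 1) : (Fin 3 → K) ⧸ K ∙ bvec l m)

lemma finrank_quotient_span_bvec (hγ : l*m ≠ 4) :
    Module.finrank K ((Fin 3 → K) ⧸ K ∙ bvec l m) = 2 := by
  have hb : bvec l m ≠ 0 := fun h ↦ sub_ne_zero.2 hγ.symm (by simpa [bvec] using congr_fun h 0)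
  have := (K ∙ bvec l m).finrank_quotient_add_finrank
  rw [finrank_span_singleton hb, Module.finrank_fin_fun] at this
  omega

lemma mk_single_zero_eq (hγ : l*m ≠ 4) : (ā 0) =
    -((l + 2)/(4 - l*m)) • (ā 1) - ((m + 2)/(4 - l*m)) • (ā 2) := by
  have hD : (4 : K) - l*m ≠ 0 := sub_ne_zero.2 hγ.symm
  have hb : (4 - l*m) • (ā 0) + (l + 2) • (ā 1) + (m + 2) • (ā 2) = 0 := by
    simp only [← Submodule.Quotient.mk_smul, ← Submodule.Quotient.mk_add, ← bvec_eq_sum]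
    exact (Submodule.Quotient.mk_eq_zero _).2 (Submodule.mem_span_singleton_self _)
  have hb' := congrArg ((4 - l*m)⁻¹ • ·) hb
  simp only [smul_add, smul_smul, inv_mul_cancel₀ hD, one_smul, smul_zero] at hb'
  linear_combination (norm := module) hb'

variable {e : (K × K) →ₗ[K] ((Fin 3 → K) ⧸ K ∙ bvec l m)}

lemma apply_c1_eq_mk_single_zero (hγ : l*m ≠ 4) (hα : α ≠ 0) (hβ : β ≠ 0) (hdr : α*l = β*m)
    (he2 : e (c2 l) = α⁻¹ • (ā 1)) (he3 : e (c3 m) = β⁻¹ • (ā 2)) : e (c1 α β) = (ā 0) := by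
  have hD : (4 : K) - l*m ≠ 0 := sub_ne_zero.2 hγ.symm
  have h1 : -(α*(l + 2))/(4 - l*m) * α⁻¹ = -((l + 2)/(4 - l*m)) := by field_simp
  have h2 : -(β*(m + 2))/(4 - l*m) * β⁻¹ = -((m + 2)/(4 - l*m)) := by field_simp
  rw [c1_eq_smul_c2_add_smul_c3 hγ hdr, map_add, map_smul, map_smul, he2, he3, smul_smul, smul_smul,
    h1, h2, mk_single_zero_eq hγ, neg_smul, neg_smul, ← sub_eq_add_neg]

lemma surjective_of_apply_c2_c3 (hγ : l*m ≠ 4) (hα : α ≠ 0) (hβ : β ≠ 0) (hdr : α*l = β*m)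
    (he2 : e (c2 l) = α⁻¹ • (ā 1)) (he3 : e (c3 m) = β⁻¹ • (ā 2)) : Function.Surjective e := by
  intro y
  obtain ⟨x, rfl⟩ := Submodule.Quotient.mk_surjective _ y
  have hx : x = x 0 • Pi.single 0 1 + x 1 • Pi.single 1 1 + x 2 • Pi.single 2 1 := by
    ext i; fin_cases i <;> simp
  refine ⟨x 0 • c1 α β + (x 1 * α) • c2 l + (x 2 * β) • c3 m, ?_⟩
  rw [map_add, map_add, map_smul, map_smul, map_smul,
    apply_c1_eq_mk_single_zero hγ hα hβ hdr he2 he3, he2, he3, smul_smul, smul_smul,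
    mul_inv_cancel_right₀ hα, mul_inv_cancel_right₀ hβ]
  conv_rhs => rw [hx]
  simp only [Submodule.Quotient.mk_add, Submodule.Quotient.mk_smul]

lemma mapQ_s1_comp_eq (hΔ : 8 - 2*α - 2*β - 2*(l*m) - (α*l + β*m) = 0) (hγ : l*m ≠ 4)
    (hα : α ≠ 0) (hβ : β ≠ 0) (hdr : α*l = β*m)
    (he2 : e (c2 l) = α⁻¹ • (ā 1)) (he3 : e (c3 m) = β⁻¹ • (ā 2)) :
    (K ∙ bvec l m).mapQ _ (s1 α β) (span_singleton_le_comap_of_apply_eq (s1_apply_bvec α β l m hΔ))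
      ∘ₗ e = e ∘ₗ sigma1 α β l m := by
  have hc1 := apply_c1_eq_mk_single_zero hγ hα hβ hdr he2 he3
  refine LinearMap.ext_on (span_c2_c3_eq_top hγ) ?_
  rintro _ (rfl | rfl)
  · simp [he2, hc1, sigma1_apply_c2 hγ, s1_apply_single, smul_smul, hα]
  · simp [he3, hc1, sigma1_apply_c3 hγ, s1_apply_single, smul_smul, hβ]

lemma mapQ_s2_comp_eq (hγ : l*m ≠ 4) (hα : α ≠ 0) (hβ : β ≠ 0) (hdr : α*l = β*m)
    (he2 : e (c2 l) = α⁻¹ • (ā 1)) (he3 : e (c3 m) = β⁻¹ • (ā 2)) :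
    (K ∙ bvec l m).mapQ _ (s2 l) (span_singleton_le_comap_of_apply_eq (s2_apply_bvec l m))
      ∘ₗ e = e ∘ₗ sigma2 l := by
  refine LinearMap.ext_on (span_c2_c3_eq_top hγ) ?_
  have hlm : β⁻¹ * l = m * α⁻¹ := by field_simp; linear_combination hdr
  rintro _ (rfl | rfl)
  · simp [he2, sigma2_apply_c2, s2_apply_single, two_smul]
  · simp [he2, he3, sigma2_apply_c3, s2_apply_single, smul_smul, hlm]

lemma mapQ_s3_comp_eq (hγ : l*m ≠ 4) (hα : α ≠ 0) (hβ : β ≠ 0) (hdr : α*l = β*m)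
    (he2 : e (c2 l) = α⁻¹ • (ā 1)) (he3 : e (c3 m) = β⁻¹ • (ā 2)) :
    (K ∙ bvec l m).mapQ _ (s3 m) (span_singleton_le_comap_of_apply_eq (s3_apply_bvec l m))
      ∘ₗ e = e ∘ₗ sigma3 m := by
  refine LinearMap.ext_on (span_c2_c3_eq_top hγ) ?_
  have hlm : α⁻¹ * m = l * β⁻¹ := by field_simp; linear_combination -hdr
  rintro _ (rfl | rfl)
  · simp [he2, he3, sigma3_apply_c2, s3_apply_single, smul_smul, hlm]
  · simp [he3, sigma3_apply_c3, s3_apply_single, two_smul]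

end

/-- Proposition 1, double-root case: assume `Δ = 0`, `γ ≠ 4`,
`α ≠ 0`, `β ≠ 0`, `αl = βm`.  Each `sᵢ` fixes `b`, hence induces `s̄ᵢ` on
`M̄ = M/(K·b)`.  If `e : K² → M̄` is linear with `e(c₂) = α⁻¹[a₂]` and
`e(c₃) = β⁻¹[a₃]`, then `e` is a linear isomorphism and `e ∘ σᵢ = s̄ᵢ ∘ e`
(expressed via representatives). -/
theorem stmt8 (α β l m : K)
    (hΔ : 8 - 2*α - 2*β - 2*(l*m) - (α*l + β*m) = 0) (hγ : l*m ≠ 4)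
    (hα : α ≠ 0) (hβ : β ≠ 0) (hdr : α*l = β*m)
    (e : (K × K) →ₗ[K] ((Fin 3 → K) ⧸ Submodule.span K {bvec l m}))
    (he2 : e (c2 l) = α⁻¹ • Submodule.Quotient.mk (Pi.single 1 1))
    (he3 : e (c3 m) = β⁻¹ • Submodule.Quotient.mk (Pi.single 2 1)) :
    Function.Bijective e ∧
    ∀ (v : K × K) (x : Fin 3 → K), Submodule.Quotient.mk x = e v →
      (Submodule.Quotient.mk (s1 α β x) = e (sigma1 α β l m v) ∧
       Submodule.Quotient.mk (s2 l x) = e (sigma2 l v) ∧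
       Submodule.Quotient.mk (s3 m x) = e (sigma3 m v)) := by
  have hsurj := surjective_of_apply_c2_c3 hγ hα hβ hdr he2 he3
  have hfinrank : Module.finrank K (K × K) = Module.finrank K ((Fin 3 → K) ⧸ K ∙ bvec l m) := by
    simp [finrank_quotient_span_bvec hγ]
  refine ⟨⟨(LinearMap.injective_iff_surjective_of_finrank_eq_finrank hfinrank).2 hsurj, hsurj⟩,
    fun v x hx ↦ ⟨?_, ?_, ?_⟩⟩
  · exact Submodule.Quotient.mk_apply_eq_of_mapQ_comp_eq
      (mapQ_s1_comp_eq hΔ hγ hα hβ hdr he2 he3) hx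
  · exact Submodule.Quotient.mk_apply_eq_of_mapQ_comp_eq (mapQ_s2_comp_eq hγ hα hβ hdr he2 he3) hx
  · exact Submodule.Quotient.mk_apply_eq_of_mapQ_comp_eq (mapQ_s3_comp_eq hγ hα hβ hdr he2 he3) hx

end
end

section
/- (Proposition 2, power formulas.) Let g := σ₃ ∘ σ₂ : K² → K². Then for all n ≥ 1: g^n(c₂) = −u_γ(2n−1)·c₂ − l·u_γ(2n)·c₃ and g^n(c₃) = m·u_γ(2n)·c₂ + u_γ(2n+1)·c₃. -/
noncomputable section

variable {K : Type*} [Field K] [CharZero K]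

lemma useq_pair (x : K) (k : ℕ) :
    useq x (2*k+3) = x * useq x (2*k+2) - useq x (2*k+1) ∧
    useq x (2*k+4) = (x-1) * useq x (2*k+2) - useq x (2*k+1) := by
  induction k with
  | zero => simp [useq]; ring
  | succ k ih =>
    obtain ⟨h1, h2⟩ := ih
    constructor
    · show useq x (2*k+1+4) = _
      rw [useq]
      have e1 : 2*k+1+2 = 2*k+3 := by ring
      have e2 : 2*(k+1)+2 = 2*k+4 := by ring
      have e3 : 2*(k+1)+1 = 2*k+3 := by ring
      rw [e1, e2, e3, h1, h2]; ring
    · show useq x (2*k+2+4) = _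
      rw [useq]
      have e1 : 2*k+2+2 = 2*k+4 := by ring
      have e2 : 2*(k+1)+2 = 2*k+4 := by ring
      have e3 : 2*(k+1)+1 = 2*k+3 := by ring
      rw [e1, e2, e3, h1, h2]; ring

lemma g_c2 (l m : K) : (sigma3 m * sigma2 l) (c2 l) = -(c2 l) - l • c3 m := by
  simp [sigma2, sigma3, c2, c3, Prod.ext_iff, Module.End.mul_apply]
  constructor <;> ring

lemma g_c3 (l m : K) : (sigma3 m * sigma2 l) (c3 m) = m • c2 l + (l*m-1) • c3 m := by
  simp [sigma2, sigma3, c2, c3, Prod.ext_iff, Module.End.mul_apply]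
  constructor <;> ring

/-- Proposition 2, power formulas: with `g = σ₃ ∘ σ₂`, for `n ≥ 1`:
`gⁿ(c₂) = −u_γ(2n−1)c₂ − l·u_γ(2n)c₃` and `gⁿ(c₃) = m·u_γ(2n)c₂ + u_γ(2n+1)c₃`. -/
theorem stmt9 (l m : K) (n : ℕ) (hn : 1 ≤ n) :
    ((sigma3 m * sigma2 l)^n) (c2 l)
      = (-(useq (l*m) (2*n-1))) • c2 l - (l * useq (l*m) (2*n)) • c3 m ∧
    ((sigma3 m * sigma2 l)^n) (c3 m)
      = (m * useq (l*m) (2*n)) • c2 l + useq (l*m) (2*n+1) • c3 m := by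
  induction n, hn using Nat.le_induction with
  | base =>
    constructor
    · rw [pow_one, g_c2]
      simp [useq, c2, c3, Prod.ext_iff]
    · rw [pow_one, g_c3]
      simp [useq, c2, c3, Prod.ext_iff]
  | succ n hn ih =>
    obtain ⟨k, rfl⟩ : ∃ k, n = k + 1 := ⟨n - 1, by omega⟩
    obtain ⟨ih2, ih3⟩ := ih
    have e1 : 2*(k+1)-1 = 2*k+1 := by omega
    have e2 : 2*(k+1) = 2*k+2 := by omega
    have e3 : 2*(k+1)+1 = 2*k+3 := by omega
    have e4 : 2*(k+1+1)-1 = 2*k+3 := by omega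
    have e5 : 2*(k+1+1) = 2*k+4 := by omega
    have e6 : 2*(k+1+1)+1 = 2*k+5 := by omega
    rw [e1] at ih2
    rw [e3] at ih3
    rw [e2] at ih2 ih3
    obtain ⟨h1, h2⟩ := useq_pair (l*m) k
    obtain ⟨h3, -⟩ := useq_pair (l*m) (k+1)
    have f2 : 2*(k+1)+2 = 2*k+4 := by omega
    have f3 : 2*(k+1)+1 = 2*k+3 := by omega
    have f4 : 2*(k+1)+3 = 2*k+5 := by omega
    rw [f2, f3, f4] at h3
    have hg : ∀ v : K × K, ((sigma3 m * sigma2 l)^(k+1+1)) v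
        = (sigma3 m * sigma2 l) (((sigma3 m * sigma2 l)^(k+1)) v) := by
      intro v; rw [pow_succ', Module.End.mul_apply]
    rw [e4, e6, e5]
    constructor
    · rw [hg, ih2, map_sub, map_smul, map_smul, g_c2, g_c3, h1, h2]
      simp only [c2, c3, Prod.smul_mk, Prod.mk_add_mk, Prod.mk_sub_mk, Prod.neg_mk,
        smul_eq_mul, Prod.mk.injEq]
      constructor <;> ring
    · rw [hg, ih3, map_add, map_smul, map_smul, g_c2, g_c3, h3, h1, h2]
      simp only [c2, c3, Prod.smul_mk, Prod.mk_add_mk, Prod.mk_sub_mk, Prod.neg_mk,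
        smul_eq_mul, Prod.mk.injEq]
      constructor <;> ring

end
end

section
/- (Proposition 2, geometric-sum formulas.) Let g := σ₃ ∘ σ₂ : K² → K² and write S_n := id + g + g² + ⋯ + g^{n−1}. If n ≥ 2 is even, then S_n(c₂) = u_γ(n)·(−γ·u_γ(n−2)·c₂ − l·u_γ(n−1)·c₃) and S_n(c₃) = u_γ(n)·(m·u_γ(n−1)·c₂ + γ·u_γ(n)·c₃). If n ≥ 3 is odd, then S_n(c₂) = u_γ(n)·(−u_γ(n−2)·c₂ − l·u_γ(n−1)·c₃) and S_n(c₃) = u_γ(n)·(m·u_γ(n−1)·c₂ + u_γ(n)·c₃). -/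
noncomputable section

variable {K : Type*} [Field K] [CharZero K]

lemma useq_rec (x : K) (n : ℕ) : useq x (n+4) = (x - 2) * useq x (n+2) - useq x n := rfl

lemma useq_rel (x : K) : ∀ k : ℕ,
    useq x (2*k+2) = useq x (2*k+1) - useq x (2*k) ∧
    useq x (2*k+3) = x * useq x (2*k+2) - useq x (2*k+1)
  | 0 => by
      constructor
      · show useq x 2 = useq x 1 - useq x 0
        simp [useq]
      · show useq x 3 = x * useq x 2 - useq x 1
        simp [useq]
  | (k+1) => by
      obtain ⟨h1, h2⟩ := useq_rel x k
      constructor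
      · show useq x (2*k+4) = useq x (2*k+3) - useq x (2*k+2)
        have h4 := useq_rec x (2*k)
        linear_combination h4 - h2 - h1
      · show useq x (2*k+5) = x * useq x (2*k+4) - useq x (2*k+3)
        have h5 : useq x (2*k+5) = (x - 2) * useq x (2*k+3) - useq x (2*k+1) :=
          useq_rec x (2*k+1)
        have h4 : useq x (2*k+4) = (x - 2) * useq x (2*k+2) - useq x (2*k) :=
          useq_rec x (2*k)
        linear_combination h5 - x * h4 + (x-1) * h2 + x * h1

lemma Gapp (l m p q : K) :
    (sigma3 m * sigma2 l) ((p, q) : K × K) = ((l*m - 1)*p + m*q, -(l*p) - q) := by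
  simp only [sigma2, sigma3, Module.End.mul_apply, LinearMap.add_apply, LinearMap.id_apply,
    LinearMap.smulRight_apply, LinearMap.fst_apply, LinearMap.snd_apply, Prod.smul_mk,
    Prod.mk_add_mk, smul_eq_mul, Prod.mk.injEq]
  constructor <;> ring

lemma key (l m : K) : ∀ k : ℕ,
    ((∑ i ∈ Finset.range (2*k+2), (sigma3 m * sigma2 l)^i) (c2 l)
      = useq (l*m) (2*k+2) •
          ((-((l*m) * useq (l*m) (2*k))) • c2 l - (l * useq (l*m) (2*k+1)) • c3 m)) ∧
    ((∑ i ∈ Finset.range (2*k+2), (sigma3 m * sigma2 l)^i) (c3 m)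
      = useq (l*m) (2*k+2) •
          ((m * useq (l*m) (2*k+1)) • c2 l + ((l*m) * useq (l*m) (2*k+2)) • c3 m)) ∧
    ((∑ i ∈ Finset.range (2*k+3), (sigma3 m * sigma2 l)^i) (c2 l)
      = useq (l*m) (2*k+3) •
          ((-(useq (l*m) (2*k+1))) • c2 l - (l * useq (l*m) (2*k+2)) • c3 m)) ∧
    ((∑ i ∈ Finset.range (2*k+3), (sigma3 m * sigma2 l)^i) (c3 m)
      = useq (l*m) (2*k+3) •
          ((m * useq (l*m) (2*k+2)) • c2 l + useq (l*m) (2*k+3) • c3 m)) := by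
  have hS : ∀ (N : ℕ) (v : K × K),
      (∑ i ∈ Finset.range (N+1), (sigma3 m * sigma2 l)^i) v
        = (∑ i ∈ Finset.range N, (sigma3 m * sigma2 l)^i) v
          + ((sigma3 m * sigma2 l)^N) v := by
    intro N v
    rw [Finset.sum_range_succ, LinearMap.add_apply]
  have hG : ∀ (N : ℕ) (v : K × K),
      ((sigma3 m * sigma2 l)^(N+1)) v = (sigma3 m * sigma2 l) (((sigma3 m * sigma2 l)^N) v) := by
    intro N v
    rw [pow_succ', Module.End.mul_apply]
  intro k
  induction k with
  | zero =>
      have e0 : useq (l*m) 0 = 0 := rfl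
      have e1 : useq (l*m) 1 = 1 := rfl
      have e2 : useq (l*m) 2 = 1 := rfl
      have e3 : useq (l*m) 3 = l*m - 1 := rfl
      have hsum2 : ∀ v : K × K, (∑ i ∈ Finset.range 2, (sigma3 m * sigma2 l)^i) v
          = v + (sigma3 m * sigma2 l) v := by
        intro v
        rw [show (2:ℕ) = 1+1 from rfl, hS, show (1:ℕ) = 0+1 from rfl, hS]
        simp [LinearMap.zero_apply, pow_one]
      have hsum3 : ∀ v : K × K, (∑ i ∈ Finset.range 3, (sigma3 m * sigma2 l)^i) v
          = v + (sigma3 m * sigma2 l) v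
            + (sigma3 m * sigma2 l) ((sigma3 m * sigma2 l) v) := by
        intro v
        rw [show (3:ℕ) = 2+1 from rfl, hS, hG 1 v, pow_one, hsum2]
      refine ⟨?_, ?_, ?_, ?_⟩
      · show (∑ i ∈ Finset.range 2, (sigma3 m * sigma2 l)^i) (c2 l)
          = useq (l*m) 2 • ((-((l*m) * useq (l*m) 0)) • c2 l - (l * useq (l*m) 1) • c3 m)
        rw [hsum2]
        simp only [c2, c3, e0, e1, e2, Prod.smul_mk, Prod.mk_add_mk, Prod.mk_sub_mk,
          smul_eq_mul, Gapp, Prod.mk.injEq]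
        constructor <;> ring
      · show (∑ i ∈ Finset.range 2, (sigma3 m * sigma2 l)^i) (c3 m)
          = useq (l*m) 2 • ((m * useq (l*m) 1) • c2 l + ((l*m) * useq (l*m) 2) • c3 m)
        rw [hsum2]
        simp only [c2, c3, e0, e1, e2, Prod.smul_mk, Prod.mk_add_mk, Prod.mk_sub_mk,
          smul_eq_mul, Gapp, Prod.mk.injEq]
        constructor <;> ring
      · show (∑ i ∈ Finset.range 3, (sigma3 m * sigma2 l)^i) (c2 l)
          = useq (l*m) 3 • ((-(useq (l*m) 1)) • c2 l - (l * useq (l*m) 2) • c3 m)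
        rw [hsum3]
        simp only [c2, c3, e0, e1, e2, e3, Prod.smul_mk, Prod.mk_add_mk, Prod.mk_sub_mk,
          smul_eq_mul, Gapp, Prod.mk.injEq]
        constructor <;> ring
      · show (∑ i ∈ Finset.range 3, (sigma3 m * sigma2 l)^i) (c3 m)
          = useq (l*m) 3 • ((m * useq (l*m) 2) • c2 l + useq (l*m) 3 • c3 m)
        rw [hsum3]
        simp only [c2, c3, e0, e1, e2, e3, Prod.smul_mk, Prod.mk_add_mk, Prod.mk_sub_mk,
          smul_eq_mul, Gapp, Prod.mk.injEq]
        constructor <;> ring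
  | succ k ih =>
      obtain ⟨ih1, ih2, ih3, ih4⟩ := ih
      obtain ⟨hu1, hu2⟩ := useq_rel (l*m) k
      obtain ⟨hu3, hu4⟩ := useq_rel (l*m) (k+1)
      have h0 : useq (l*m) (2*k) = useq (l*m) (2*k+1) - useq (l*m) (2*k+2) := by
        linear_combination hu1
      have h3 : useq (l*m) (2*k+3) = (l*m) * useq (l*m) (2*k+2) - useq (l*m) (2*k+1) := hu2
      have h4 : useq (l*m) (2*k+4) = useq (l*m) (2*k+3) - useq (l*m) (2*k+2) := hu3
      have h5 : useq (l*m) (2*k+5) = (l*m) * useq (l*m) (2*k+4) - useq (l*m) (2*k+3) := hu4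
      -- the even-index sums at 2k+4
      have hg2 : ∀ (v : K × K),
          ((sigma3 m * sigma2 l)^(2*k+2)) v
            = (∑ i ∈ Finset.range (2*k+3), (sigma3 m * sigma2 l)^i) v
              - (∑ i ∈ Finset.range (2*k+2), (sigma3 m * sigma2 l)^i) v := by
        intro v
        have := hS (2*k+2) v
        rw [this]
        abel
      have hS4 : ∀ (v : K × K),
          (∑ i ∈ Finset.range (2*k+4), (sigma3 m * sigma2 l)^i) v
            = (∑ i ∈ Finset.range (2*k+3), (sigma3 m * sigma2 l)^i) v
              + (sigma3 m * sigma2 l) (((sigma3 m * sigma2 l)^(2*k+2)) v) := by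
        intro v
        rw [show (2*k+4 : ℕ) = (2*k+3)+1 from rfl, hS, hG]
      have hS5 : ∀ (v : K × K),
          (∑ i ∈ Finset.range (2*k+5), (sigma3 m * sigma2 l)^i) v
            = (∑ i ∈ Finset.range (2*k+4), (sigma3 m * sigma2 l)^i) v
              + (sigma3 m * sigma2 l) ((sigma3 m * sigma2 l) (((sigma3 m * sigma2 l)^(2*k+2)) v)) := by
        intro v
        rw [show (2*k+5 : ℕ) = (2*k+4)+1 from rfl, hS, hG, hG]
      have hv2 := hg2 (c2 l)
      have hv3 := hg2 (c3 m)
      rw [ih3, ih1] at hv2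
      rw [ih4, ih2] at hv3
      have hA := hS4 (c2 l)
      have hB := hS4 (c3 m)
      have hC := hS5 (c2 l)
      have hD := hS5 (c3 m)
      rw [hv2, ih3] at hA
      rw [hv3, ih4] at hB
      rw [hv2] at hC
      rw [hv3] at hD
      rw [hA] at hC
      rw [hB] at hD
      refine ⟨?_, ?_, ?_, ?_⟩
      · show (∑ i ∈ Finset.range (2*k+4), (sigma3 m * sigma2 l)^i) (c2 l)
          = useq (l*m) (2*k+4) •
              ((-((l*m) * useq (l*m) (2*k+2))) • c2 l - (l * useq (l*m) (2*k+3)) • c3 m)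
        rw [hA, h4, h3, h0]
        simp only [c2, c3, Prod.smul_mk, Prod.mk_add_mk, Prod.mk_sub_mk, smul_eq_mul,
          Gapp, Prod.mk.injEq]
        constructor <;> ring
      · show (∑ i ∈ Finset.range (2*k+4), (sigma3 m * sigma2 l)^i) (c3 m)
          = useq (l*m) (2*k+4) •
              ((m * useq (l*m) (2*k+3)) • c2 l + ((l*m) * useq (l*m) (2*k+4)) • c3 m)
        rw [hB, h4, h3]
        simp only [c2, c3, Prod.smul_mk, Prod.mk_add_mk, Prod.mk_sub_mk, smul_eq_mul,
          Gapp, Prod.mk.injEq]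
        constructor <;> ring
      · show (∑ i ∈ Finset.range (2*k+5), (sigma3 m * sigma2 l)^i) (c2 l)
          = useq (l*m) (2*k+5) •
              ((-(useq (l*m) (2*k+3))) • c2 l - (l * useq (l*m) (2*k+4)) • c3 m)
        rw [hC, h5, h4, h3, h0]
        simp only [c2, c3, Prod.smul_mk, Prod.mk_add_mk, Prod.mk_sub_mk, smul_eq_mul,
          Gapp, Prod.mk.injEq]
        constructor <;> ring
      · show (∑ i ∈ Finset.range (2*k+5), (sigma3 m * sigma2 l)^i) (c3 m)
          = useq (l*m) (2*k+5) •
              ((m * useq (l*m) (2*k+4)) • c2 l + useq (l*m) (2*k+5) • c3 m)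
        rw [hD, h5, h4, h3]
        simp only [c2, c3, Prod.smul_mk, Prod.mk_add_mk, Prod.mk_sub_mk, smul_eq_mul,
          Gapp, Prod.mk.injEq]
        constructor <;> ring

/-- Proposition 2, geometric sums: with `g = σ₃ ∘ σ₂` and
`S_n = 1 + g + ⋯ + g^(n−1)`: for even `n ≥ 2`,
`S_n(c₂) = u_γ(n)(−γu_γ(n−2)c₂ − l·u_γ(n−1)c₃)`,
`S_n(c₃) = u_γ(n)(m·u_γ(n−1)c₂ + γu_γ(n)c₃)`; for odd `n ≥ 3`,
`S_n(c₂) = u_γ(n)(−u_γ(n−2)c₂ − l·u_γ(n−1)c₃)`,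
`S_n(c₃) = u_γ(n)(m·u_γ(n−1)c₂ + u_γ(n)c₃)`. -/
theorem stmt10 (l m : K) (n : ℕ) :
    (Even n → 2 ≤ n →
      (∑ k ∈ Finset.range n, (sigma3 m * sigma2 l)^k) (c2 l)
        = useq (l*m) n •
            ((-((l*m) * useq (l*m) (n-2))) • c2 l - (l * useq (l*m) (n-1)) • c3 m) ∧
      (∑ k ∈ Finset.range n, (sigma3 m * sigma2 l)^k) (c3 m)
        = useq (l*m) n •
            ((m * useq (l*m) (n-1)) • c2 l + ((l*m) * useq (l*m) n) • c3 m)) ∧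
    (Odd n → 3 ≤ n →
      (∑ k ∈ Finset.range n, (sigma3 m * sigma2 l)^k) (c2 l)
        = useq (l*m) n •
            ((-(useq (l*m) (n-2))) • c2 l - (l * useq (l*m) (n-1)) • c3 m) ∧
      (∑ k ∈ Finset.range n, (sigma3 m * sigma2 l)^k) (c3 m)
        = useq (l*m) n •
            ((m * useq (l*m) (n-1)) • c2 l + useq (l*m) n • c3 m)) := by
  constructor
  · intro hev hn2
    obtain ⟨r, hr⟩ := hev
    have hk : ∃ k : ℕ, n = 2*k+2 := ⟨r - 1, by omega⟩
    obtain ⟨k, hk⟩ := hk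
    have e1 : n - 1 = 2*k+1 := by omega
    have e2 : n - 2 = 2*k := by omega
    obtain ⟨H1, H2, _, _⟩ := key l m k
    rw [e1, e2, hk]
    exact ⟨H1, H2⟩
  · intro hod hn3
    obtain ⟨r, hr⟩ := hod
    have hk : ∃ k : ℕ, n = 2*k+3 := ⟨r - 1, by omega⟩
    obtain ⟨k, hk⟩ := hk
    have e1 : n - 1 = 2*k+2 := by omega
    have e2 : n - 2 = 2*k+1 := by omega
    obtain ⟨_, _, H3, H4⟩ := key l m k
    rw [e1, e2, hk]
    exact ⟨H3, H4⟩

end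
end

section
/- (Formulas (8)–(9) and Theorem 3.) Assume γ ≠ 4. Then (s₂ ∘ z₁)(a₁) = a₁ + ((m+2)/(4−γ))·(l·a₂ + 2a₃), (s₂ ∘ z₁)(a₂) = a₂, (s₂ ∘ z₁)(a₃) = a₃ − (l·a₂ + 2a₃), and (s₃ ∘ z₁)(a₁) = a₁ + ((l+2)/(4−γ))·(2a₂ + m·a₃), (s₃ ∘ z₁)(a₃) = a₃, (s₃ ∘ z₁)(a₂) = a₂ − (2a₂ + m·a₃). Moreover, if z₁ = (s₂ ∘ s₃)^k for some integer k ≥ 1, then the subgroup of GL(M) generated by {s₁, s₂, s₃} equals the subgroup generated by {s₁, s₂ ∘ z₁, s₃ ∘ z₁}. -/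
noncomputable section

variable {K : Type*} [Field K] [CharZero K]

set_option linter.unusedSectionVars false in
lemma z1_sq' (l m : K) (hγ : l*m ≠ 4) : z1 l m * z1 l m = 1 := by
  have h : (4 : K) - l*m ≠ 0 := sub_ne_zero.mpr (fun h => hγ h.symm)
  apply LinearMap.ext; intro x; funext i
  fin_cases i <;>
    simp [z1, lf, bvec, Module.End.mul_apply, Pi.single_apply,
      Matrix.vecHead, Matrix.vecTail, Function.comp] <;>
    field_simp <;> ring

set_option linter.unusedSectionVars false in
lemma z1_comm_s3' (l m : K) : z1 l m * s3 m = s3 m * z1 l m := by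
  apply LinearMap.ext; intro x; funext i
  fin_cases i <;>
    simp [z1, s3, lf, bvec, Module.End.mul_apply, Pi.single_apply,
      Matrix.vecHead, Matrix.vecTail, Function.comp] <;> ring

set_option maxHeartbeats 1000000 in
/-- formulas (8)–(9) and Theorem 3: with `γ ≠ 4`:
`(s₂z₁)(a₁) = a₁ + ((m+2)/(4−γ))(la₂ + 2a₃)`, `(s₂z₁)(a₂) = a₂`,
`(s₂z₁)(a₃) = a₃ − (la₂ + 2a₃)`,
`(s₃z₁)(a₁) = a₁ + ((l+2)/(4−γ))(2a₂ + ma₃)`, `(s₃z₁)(a₃) = a₃`,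
`(s₃z₁)(a₂) = a₂ − (2a₂ + ma₃)`; moreover if `z₁ = (s₂s₃)^k` for some `k ≥ 1`,
then the group generated by `{s₁,s₂,s₃}` equals the one generated by
`{s₁, s₂z₁, s₃z₁}` (as submonoids of `End M`, all generators being involutions). -/
theorem stmt18 (α β l m : K) (hγ : l*m ≠ 4) :
    (s2 l * z1 l m) (Pi.single 0 1)
      = (Pi.single 0 1 : Fin 3 → K) +
          ((m+2)/(4 - l*m)) • (l • (Pi.single 1 1 : Fin 3 → K) + (2:K) • (Pi.single 2 1 : Fin 3 → K)) ∧
    (s2 l * z1 l m) (Pi.single 1 1) = (Pi.single 1 1 : Fin 3 → K) ∧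
    (s2 l * z1 l m) (Pi.single 2 1)
      = (Pi.single 2 1 : Fin 3 → K) - (l • (Pi.single 1 1 : Fin 3 → K) + (2:K) • (Pi.single 2 1 : Fin 3 → K)) ∧
    (s3 m * z1 l m) (Pi.single 0 1)
      = (Pi.single 0 1 : Fin 3 → K) +
          ((l+2)/(4 - l*m)) • ((2:K) • (Pi.single 1 1 : Fin 3 → K) + m • (Pi.single 2 1 : Fin 3 → K)) ∧
    (s3 m * z1 l m) (Pi.single 2 1) = (Pi.single 2 1 : Fin 3 → K) ∧
    (s3 m * z1 l m) (Pi.single 1 1)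
      = (Pi.single 1 1 : Fin 3 → K) - ((2:K) • (Pi.single 1 1 : Fin 3 → K) + m • (Pi.single 2 1 : Fin 3 → K)) ∧
    (∀ k : ℕ, 1 ≤ k → z1 l m = (s2 l * s3 m)^k →
      Submonoid.closure {s1 α β, s2 l, s3 m}
        = Submonoid.closure {s1 α β, s2 l * z1 l m, s3 m * z1 l m}) := by

  have h : (4 : K) - l*m ≠ 0 := sub_ne_zero.mpr (fun h => hγ h.symm)
  refine ⟨?_, ?_, ?_, ?_, ?_, ?_, ?_⟩
  · funext i; fin_cases i <;>
      simp [s2, z1, lf, bvec, Module.End.mul_apply, Pi.single_apply,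
        Matrix.vecHead, Matrix.vecTail, Function.comp] <;>
      (try norm_num) <;> (try field_simp) <;> (try ring)
  · funext i; fin_cases i <;>
      simp [s2, z1, lf, bvec, Module.End.mul_apply, Pi.single_apply,
        Matrix.vecHead, Matrix.vecTail, Function.comp] <;>
      (try norm_num) <;> (try field_simp) <;> (try ring)
  · funext i; fin_cases i <;>
      simp [s2, z1, lf, bvec, Module.End.mul_apply, Pi.single_apply,
        Matrix.vecHead, Matrix.vecTail, Function.comp] <;>
      (try norm_num) <;> (try field_simp) <;> (try ring)
  · funext i; fin_cases i <;>
      simp [s3, z1, lf, bvec, Module.End.mul_apply, Pi.single_apply,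
        Matrix.vecHead, Matrix.vecTail, Function.comp] <;>
      (try norm_num) <;> (try field_simp) <;> (try ring)
  · funext i; fin_cases i <;>
      simp [s3, z1, lf, bvec, Module.End.mul_apply, Pi.single_apply,
        Matrix.vecHead, Matrix.vecTail, Function.comp] <;>
      (try norm_num) <;> (try field_simp) <;> (try ring)
  · funext i; fin_cases i <;>
      simp [s3, z1, lf, bvec, Module.End.mul_apply, Pi.single_apply,
        Matrix.vecHead, Matrix.vecTail, Function.comp] <;>
      (try norm_num) <;> (try field_simp) <;> (try ring)
  · intro k hk hz
    have hzz := z1_sq' l m hγ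
    have hcomm := z1_comm_s3' l m
    have hprod : (s2 l * z1 l m) * (s3 m * z1 l m) = s2 l * s3 m := by
      rw [mul_assoc, ← mul_assoc (z1 l m), hcomm, mul_assoc, hzz, mul_one]
    apply le_antisymm <;> rw [Submonoid.closure_le] <;> intro x hx
    · have h1 : s1 α β ∈ Submonoid.closure {s1 α β, s2 l * z1 l m, s3 m * z1 l m} :=
        Submonoid.subset_closure (Set.mem_insert _ _)
      have h2' : s2 l * z1 l m ∈ Submonoid.closure {s1 α β, s2 l * z1 l m, s3 m * z1 l m} :=
        Submonoid.subset_closure (Set.mem_insert_of_mem _ (Set.mem_insert _ _))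
      have h3' : s3 m * z1 l m ∈ Submonoid.closure {s1 α β, s2 l * z1 l m, s3 m * z1 l m} :=
        Submonoid.subset_closure (Set.mem_insert_of_mem _ (Set.mem_insert_of_mem _ rfl))
      have hz1mem : z1 l m ∈ Submonoid.closure {s1 α β, s2 l * z1 l m, s3 m * z1 l m} := by
        have := pow_mem (mul_mem h2' h3') k
        rwa [hprod, ← hz] at this
      rcases hx with rfl | rfl | rfl
      · exact h1
      · have := mul_mem h2' hz1mem
        rwa [mul_assoc, hzz, mul_one] at this
      · have := mul_mem h3' hz1mem
        rwa [mul_assoc, hzz, mul_one] at this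
    · have h1 : s1 α β ∈ Submonoid.closure {s1 α β, s2 l, s3 m} :=
        Submonoid.subset_closure (Set.mem_insert _ _)
      have h2 : s2 l ∈ Submonoid.closure {s1 α β, s2 l, s3 m} :=
        Submonoid.subset_closure (Set.mem_insert_of_mem _ (Set.mem_insert _ _))
      have h3 : s3 m ∈ Submonoid.closure {s1 α β, s2 l, s3 m} :=
        Submonoid.subset_closure (Set.mem_insert_of_mem _ (Set.mem_insert_of_mem _ rfl))
      have hz1mem : z1 l m ∈ Submonoid.closure {s1 α β, s2 l, s3 m} := by
        rw [hz]; exact pow_mem (mul_mem h2 h3) k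
      rcases hx with rfl | rfl | rfl
      · exact h1
      · exact mul_mem h2 hz1mem
      · exact mul_mem h3 hz1mem

end
end
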